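/- arXiv:2003.13378 — 6 statements merged into one kernel-verified Lean document; each statement's English description precedes it below -/
import Mathlib

section
/- Let k be an even integer and a an integer, and let d be a positive integer. Then d divides a in the k-arithmetic sense (i.e., there exists an integer b with b ⊙_k d = a) if and only if d divides a in the usual sense. -/
def odot (k m n : ℤ) : ℤ := (m - n + 1) * n + n * (n - 1) * k / 2

theorem stmt_7 (k a d : ℤ) (hk : Even k) (hd : 0 < d) :
    (∃ b : ℤ, odot k b d = a) ↔ d ∣ a := by
  obtain ⟨t, ht⟩ := hk
  have hk2 : k = 2 * t := by omega
  have hdiv : ∀ m : ℤ, odot k m d = (m - d + 1) * d + d * (d - 1) * t := by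
    intro m
    unfold odot
    rw [hk2]
    rw [show d * (d - 1) * (2 * t) = (d * (d - 1) * t) * 2 by ring,
      Int.mul_ediv_cancel _ (by norm_num)]
  constructor
  · rintro ⟨b, rfl⟩
    rw [hdiv]
    exact ⟨b - d + 1 + (d - 1) * t, by ring⟩
  · rintro ⟨c, rfl⟩
    exact ⟨c - 1 + d - (d - 1) * t, by rw [hdiv]; ring⟩
end

section
/- Let k be an odd integer, a an integer, and d a positive integer. Then d is a k-arithmetic divisor of a (i.e., there exists an integer b with b ⊙_k d = a) if and only if d divides 2a and it is not the case that d is even and d divides a. -/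
theorem stmt_8 (k a d : ℤ) (hk : Odd k) (hd : 0 < d) :
    (∃ b : ℤ, odot k b d = a) ↔ (d ∣ 2 * a ∧ ¬(Even d ∧ d ∣ a)) := by
  obtain ⟨t, ht⟩ : ∃ t, d * (d - 1) = 2 * t := by
    obtain ⟨r, hr⟩ := Int.even_mul_succ_self (d - 1)
    exact ⟨r, by linear_combination hr⟩
  have hodot : ∀ b : ℤ, odot k b d = (b - d + 1) * d + t * k := by
    intro b
    unfold odot
    rw [ht, mul_assoc, Int.mul_ediv_cancel_left _ two_ne_zero]
  constructor
  · rintro ⟨b, hb⟩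
    rw [hodot] at hb
    refine ⟨⟨2 * (b - d + 1) + (d - 1) * k, by linear_combination (-2 : ℤ) * hb - k * ht⟩, ?_⟩
    rintro ⟨hde, ⟨m, hm⟩⟩
    have hc : (d - 1) * k = 2 * (m - (b - d + 1)) := by
      have := mul_left_cancel₀ (ne_of_gt hd)
        (show d * ((d - 1) * k) = d * (2 * (m - (b - d + 1))) by
          linear_combination k * ht + 2 * hb + 2 * hm)
      exact this
    have hodd : Odd ((d - 1) * k) := (hde.sub_odd odd_one).mul hk
    have heven : Even ((d - 1) * k) := ⟨m - (b - d + 1), by linarith⟩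
    exact (Int.not_odd_iff_even.mpr heven) hodd
  · rintro ⟨⟨c, hc⟩, hno⟩
    rcases Int.even_or_odd d with hde | hdo
    · -- d even
      obtain ⟨e, he⟩ := hde
      have hae : a = e * c := by
        have : 2 * a = 2 * (e * c) := by linear_combination hc + c * he
        linarith
      have hcodd : Odd c := by
        rcases Int.even_or_odd c with ⟨c', hc'⟩ | h
        · exact absurd ⟨⟨e, he⟩, ⟨c', by subst he hae hc'; ring⟩⟩ hno
        · exact h
      have htE : t = e * (d - 1) := by
        have : 2 * t = 2 * (e * (d - 1)) := by linear_combination -ht + (d - 1) * he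
        linarith
      obtain ⟨w, hw⟩ : ∃ w : ℤ, c - (d - 1) * k = 2 * w := by
        obtain ⟨c0, hc0⟩ := hcodd
        obtain ⟨k0, hk0⟩ := hk
        have hd1 : Odd (d - 1) := Even.sub_odd ⟨e, he⟩ odd_one
        obtain ⟨d0, hd0⟩ := hd1
        exact ⟨c0 - (2 * d0 * k0 + d0 + k0),
          by linear_combination hc0 - k * hd0 - (2 * d0 + 1) * hk0⟩
      refine ⟨w + d - 1, ?_⟩
      rw [hodot]
      linear_combination k * htE + w * he - hae - e * hw
    · -- d odd
      obtain ⟨s, hs⟩ := hdo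
      have hceven : Even c := by
        have h2 : (2:ℤ) ∣ d * c := ⟨a, by linarith⟩
        rcases (Int.prime_two.dvd_mul).mp h2 with h | h
        · exfalso; obtain ⟨u, hu⟩ := h; omega
        · obtain ⟨u, hu⟩ := h; exact ⟨u, by omega⟩
      obtain ⟨c', hc'⟩ := hceven
      have ha : a = d * c' := by
        have : 2 * a = 2 * (d * c') := by linear_combination hc + d * hc'
        linarith
      have htd : t = d * s := by
        have : 2 * t = 2 * (d * s) := by linear_combination -ht + d * hs
        linarith
      refine ⟨c' - s * k + d - 1, ?_⟩
      rw [hodot]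
      linear_combination k * htd - ha
end

section
/- Let k be an even integer. An integer p > 1 has exactly two k-arithmetic divisors if and only if p is a prime number (in the usual sense). -/
def kDivisors (k a : ℤ) : Set ℤ := {d : ℤ | 0 < d ∧ ∃ b : ℤ, odot k b d = a}

theorem Nat.card_divisors_eq_two_iff {n : ℕ} : n.divisors.card = 2 ↔ n.Prime := by
  refine ⟨fun h ↦ ?_, fun hn ↦ by rw [hn.divisors, Finset.card_pair hn.one_lt.ne]⟩
  have hn0 : n ≠ 0 := by rintro rfl; simp at h
  have hn1 : n ≠ 1 := by rintro rfl; simp at h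
  have hpair : n.divisors = {1, n} :=
    (Finset.eq_of_subset_of_card_le
      (Finset.insert_subset (Nat.one_mem_divisors.2 hn0) (by simpa using hn0))
      (by rw [h, Finset.card_pair (Ne.symm hn1)])).symm
  refine Nat.prime_def.2 ⟨by omega, fun m hm ↦ ?_⟩
  simpa [hpair] using Nat.mem_divisors.2 ⟨hm, hn0⟩

theorem Int.setOf_pos_dvd_eq_image_divisors {z : ℤ} (hz : z ≠ 0) :
    {d : ℤ | 0 < d ∧ d ∣ z} = ((↑) : ℕ → ℤ) '' z.natAbs.divisors := by
  ext d
  simp only [Set.mem_ofPred_eq, Set.mem_image, Finset.mem_coe, Nat.mem_divisors]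
  constructor
  · rintro ⟨hd, hdz⟩
    exact ⟨d.natAbs, ⟨Int.natAbs_dvd_natAbs.2 hdz, by simpa using hz⟩, by omega⟩
  · rintro ⟨n, ⟨hn, hz⟩, rfl⟩
    exact ⟨Int.natCast_pos.2 (Nat.pos_of_dvd_of_pos hn (Nat.pos_of_ne_zero hz)),
      Int.natCast_dvd.2 hn⟩

theorem Int.encard_setOf_pos_dvd {z : ℤ} (hz : z ≠ 0) :
    {d : ℤ | 0 < d ∧ d ∣ z}.encard = z.natAbs.divisors.card := by
  rw [setOf_pos_dvd_eq_image_divisors hz, Nat.cast_injective.encard_image,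
    Set.encard_coe_eq_coe_finsetCard]

theorem odot_of_even {k : ℤ} (hk : Even k) (m n : ℤ) :
    odot k m n = (m - n + 1 + (n - 1) * (k / 2)) * n := by
  obtain ⟨t, rfl⟩ := hk.two_dvd
  rw [odot, mul_left_comm, Int.mul_ediv_cancel_left _ two_ne_zero,
    Int.mul_ediv_cancel_left _ two_ne_zero]
  ring

theorem kDivisors_of_even {k : ℤ} (hk : Even k) (a : ℤ) :
    kDivisors k a = {d : ℤ | 0 < d ∧ d ∣ a} := by
  ext d
  simp only [kDivisors, Set.mem_ofPred_eq, odot_of_even hk]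
  refine and_congr_right fun _ ↦ ⟨fun ⟨b, hb⟩ ↦ ⟨_, hb.symm.trans (mul_comm _ _)⟩, ?_⟩
  rintro ⟨c, rfl⟩
  exact ⟨c + d - 1 - (d - 1) * (k / 2), by ring⟩

theorem stmt_9 (k p : ℤ) (hk : Even k) (hp : 1 < p) :
    (kDivisors k p).encard = 2 ↔ Prime p := by
  rw [kDivisors_of_even hk, Int.encard_setOf_pos_dvd (by omega), Int.prime_iff_natAbs_prime,
    ← Nat.card_divisors_eq_two_iff]
  exact_mod_cast Iff.rfl
end

section
/- Let k be an odd integer. An integer p > 1 has exactly two k-arithmetic divisors if and only if p is a power of two, i.e., p = 2^s for some s ≥ 1. -/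
/-
For odd `k`, an odd `d > 0` is a `k`-divisor of `a` iff `d ∣ a`, and `2e` is one iff `a = e c`
with `c` odd. So if `a = 2^s m` with `m` odd, the `k`-divisors of `a` include `1`, `2a` and `m`,
which are distinct unless `m = 1`; while for `a = 2^s` they are exactly `1` and `2a`, because an odd positive
divisor of a power of two is `1`.
-/

lemma odot_two_mul_add_one (k b t : ℤ) :
    odot k b (2 * t + 1) = (2 * t + 1) * (b - 2 * t + t * k) := by
  have hdiv : (2 * t + 1) * (2 * t + 1 - 1) * k / 2 = (2 * t + 1) * t * k := by
    rw [show (2 * t + 1) * (2 * t + 1 - 1) * k = 2 * ((2 * t + 1) * t * k) by ring]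
    exact Int.mul_ediv_cancel_left _ two_ne_zero
  rw [odot, hdiv]
  ring

lemma odot_two_mul (k b e : ℤ) :
    odot k b (2 * e) = e * (2 * (b - 2 * e + 1) + (2 * e - 1) * k) := by
  have hdiv : 2 * e * (2 * e - 1) * k / 2 = e * (2 * e - 1) * k := by
    rw [show 2 * e * (2 * e - 1) * k = 2 * (e * (2 * e - 1) * k) by ring]
    exact Int.mul_ediv_cancel_left _ two_ne_zero
  rw [odot, hdiv]
  ring

lemma mem_kDivisors_of_odd_iff {k a d : ℤ} (hd : Odd d) :
    d ∈ kDivisors k a ↔ 0 < d ∧ d ∣ a := by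
  obtain ⟨t, rfl⟩ := hd
  refine and_congr_right fun _ => ⟨?_, ?_⟩
  · rintro ⟨b, rfl⟩
    exact ⟨_, odot_two_mul_add_one k b t⟩
  · rintro ⟨c, rfl⟩
    exact ⟨c + 2 * t - t * k, by rw [odot_two_mul_add_one]; ring⟩

lemma two_mul_mem_kDivisors_iff {k a e : ℤ} (hk : Odd k) :
    2 * e ∈ kDivisors k a ↔ 0 < e ∧ ∃ c, Odd c ∧ a = e * c := by
  have hodd : Odd ((2 * e - 1) * k) := Odd.mul ⟨e - 1, by ring⟩ hk
  refine ⟨fun ⟨he, b, hb⟩ => ⟨by omega, _, ?_, by rw [← hb, odot_two_mul]⟩, ?_⟩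
  · exact (even_two_mul _).add_odd hodd
  · rintro ⟨he, c, hc, rfl⟩
    obtain ⟨q, hq⟩ : Even (c - (2 * e - 1) * k) := hc.sub_odd hodd
    refine ⟨by omega, q + 2 * e - 1, ?_⟩
    rw [odot_two_mul]
    linear_combination -e * hq

lemma Int.eq_one_of_odd_of_dvd_two_pow {d : ℤ} {s : ℕ} (hd : Odd d) (hpos : 0 < d)
    (h : d ∣ 2 ^ s) : d = 1 := by
  have hunit : IsUnit d := ((Int.isCoprime_two_right.mpr hd).pow_right).isUnit_of_dvd' dvd_rfl h
  rcases Int.isUnit_iff.mp hunit with h1 | h1 <;> omega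

lemma Int.exists_eq_two_pow_mul_odd {n : ℤ} (hn : 0 < n) :
    ∃ (s : ℕ) (m : ℤ), Odd m ∧ n = 2 ^ s * m := by
  lift n to ℕ using hn.le
  obtain ⟨s, m, hm, rfl⟩ := Nat.exists_eq_two_pow_mul_odd (n := n) (by omega)
  exact ⟨s, m, hm.natCast, by push_cast; ring⟩

lemma kDivisors_two_pow {k : ℤ} (hk : Odd k) (s : ℕ) :
    kDivisors k (2 ^ s) = {1, 2 * 2 ^ s} := by
  ext d
  simp only [Set.mem_insert_iff, Set.mem_singleton_iff]
  obtain ⟨e, rfl | rfl⟩ := Int.even_or_odd' d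
  · rw [two_mul_mem_kDivisors_iff hk]
    constructor
    · rintro ⟨he, c, hc, hce⟩
      have hc0 : 0 < c := pos_of_mul_pos_right (hce ▸ pow_pos two_pos s) he.le
      have hc1 := Int.eq_one_of_odd_of_dvd_two_pow hc hc0 ⟨e, by rw [hce, mul_comm]⟩
      subst hc1
      omega
    · rintro (h | h)
      · omega
      · obtain rfl : e = 2 ^ s := by omega
        exact ⟨by positivity, 1, odd_one, (mul_one _).symm⟩
  · rw [mem_kDivisors_of_odd_iff (odd_two_mul_add_one e)]
    constructor
    · rintro ⟨hpos, hdvd⟩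
      exact Or.inl (Int.eq_one_of_odd_of_dvd_two_pow (odd_two_mul_add_one e) hpos hdvd)
    · rintro (h | h)
      · exact ⟨by omega, by rw [h]; exact one_dvd _⟩
      · omega

theorem stmt_10 (k p : ℤ) (hk : Odd k) (hp : 1 < p) :
    (kDivisors k p).encard = 2 ↔ ∃ s : ℕ, 1 ≤ s ∧ p = 2 ^ s := by
  constructor
  · intro hcard
    obtain ⟨s, m, hm, rfl⟩ := Int.exists_eq_two_pow_mul_odd (by omega : 0 < p)
    have hm0 : 0 < m := pos_of_mul_pos_right (a := (2 : ℤ) ^ s) (by omega) (by positivity)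
    have hpair : {1, 2 * (2 ^ s * m)} = kDivisors k (2 ^ s * m) := by
      refine Set.Finite.eq_of_subset_of_encard_le (Set.toFinite _) ?_ ?_
      · rintro d (rfl | rfl)
        · exact (mem_kDivisors_of_odd_iff odd_one).mpr ⟨one_pos, one_dvd _⟩
        · exact (two_mul_mem_kDivisors_iff hk).mpr ⟨by omega, 1, odd_one, (mul_one _).symm⟩
      · rw [hcard, Set.encard_pair (by omega)]
    have hmem : m ∈ kDivisors k (2 ^ s * m) :=
      (mem_kDivisors_of_odd_iff hm).mpr ⟨hm0, dvd_mul_left m _⟩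
    rw [← hpair, Set.mem_insert_iff, Set.mem_singleton_iff] at hmem
    obtain ⟨r, rfl⟩ := hm
    obtain rfl : r = 0 := by rcases hmem with h | h <;> omega
    refine ⟨s, Nat.one_le_iff_ne_zero.mpr ?_, by ring⟩
    rintro rfl
    omega
  · rintro ⟨s, -, rfl⟩
    rw [kDivisors_two_pow hk, Set.encard_pair]
    have : (1 : ℤ) ≤ 2 ^ s := one_le_pow₀ one_le_two
    omega
end

section
/- Let k be an odd integer and let a > 1 be an integer that is a power of two, say a = 2^s with s ≥ 1. Then the set of k-arithmetic divisors of a is exactly {1, 2^{s+1}}. -/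
lemma twice_odot (k b d : ℤ) : 2 * odot k b d = (2 * (b - d + 1) + (d - 1) * k) * d := by
  have hdvd : (2:ℤ) ∣ d * (d - 1) * k := by
    refine Dvd.dvd.mul_right ?_ k
    have := Int.even_mul_succ_self (d - 1)
    simpa [mul_comm] using this.two_dvd
  have h := Int.ediv_mul_cancel hdvd
  unfold odot
  linear_combination h

lemma odd_eq_one_of_dvd_pow {m : ℤ} (n : ℕ) (hodd : Odd m) (hpos : 0 < m)
    (hdvd : m ∣ 2 ^ n) : m = 1 := by
  have h1 : m.natAbs ∣ 2 ^ n := by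
    have h := Int.natAbs_dvd_natAbs.mpr hdvd
    simpa [Int.natAbs_pow] using h
  have hcop : Nat.Coprime m.natAbs 2 := by
    rw [Nat.coprime_two_right]
    rw [Int.natAbs_odd]
    exact hodd
  have := Nat.Coprime.eq_one_of_dvd (hcop.pow_right n) h1
  omega

theorem stmt_11 (k : ℤ) (hk : Odd k) (s : ℕ) (hs : 1 ≤ s) :
    kDivisors k (2 ^ s) = {1, 2 ^ (s + 1)} := by
  ext d
  simp only [kDivisors, Set.mem_setOf_eq, Set.mem_insert_iff, Set.mem_singleton_iff]
  constructor
  · rintro ⟨hd, b, hb⟩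
    have h2 : (2 * (b - d + 1) + (d - 1) * k) * d = 2 ^ (s + 1) := by
      rw [← twice_odot k b d, hb]; ring
    set M := 2 * (b - d + 1) + (d - 1) * k with hM
    rcases Int.even_or_odd d with hev | hod
    · right
      have hdo1 : Odd (d - 1) := Even.sub_odd hev odd_one
      have hModd : Odd M := (even_two_mul _).add_odd (hdo1.mul hk)
      have hpow : (0:ℤ) < 2 ^ (s + 1) := by positivity
      have hMpos : 0 < M := by nlinarith
      have hMdvd : M ∣ 2 ^ (s + 1) := ⟨d, h2.symm⟩
      have hM1 : M = 1 := odd_eq_one_of_dvd_pow (s + 1) hModd hMpos hMdvd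
      rw [hM1, one_mul] at h2
      exact h2
    · left
      have hddvd : d ∣ 2 ^ (s + 1) := Dvd.intro_left M h2
      exact odd_eq_one_of_dvd_pow (s + 1) hod hd hddvd
  · rintro (rfl | rfl)
    · refine ⟨one_pos, 2 ^ s, ?_⟩
      simp [odot]
    · refine ⟨by positivity, 2 ^ (s + 1) - (1 + (2 ^ (s + 1) - 1) * k) / 2, ?_⟩
      have hev : Even ((2:ℤ) ^ (s + 1)) := by
        rw [pow_succ]
        exact (Int.even_mul).mpr (Or.inr even_two)
      have hodd : Odd (((2:ℤ) ^ (s + 1) - 1) * k) := (Even.sub_odd hev odd_one).mul hk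
      have h2dvd : (2:ℤ) ∣ 1 + (2 ^ (s + 1) - 1) * k := by
        rcases hodd with ⟨c, hc⟩
        exact ⟨c + 1, by linarith⟩
      have hb2 : 2 * ((1 + ((2:ℤ) ^ (s + 1) - 1) * k) / 2) = 1 + (2 ^ (s + 1) - 1) * k :=
        Int.mul_ediv_cancel' h2dvd
      have key := twice_odot k (2 ^ (s + 1) - (1 + (2 ^ (s + 1) - 1) * k) / 2) (2 ^ (s + 1))
      have hfin : 2 * odot k (2 ^ (s + 1) - (1 + (2 ^ (s + 1) - 1) * k) / 2) (2 ^ (s + 1))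
          = 2 * 2 ^ s := by
        rw [key]
        linear_combination (-(2:ℤ) ^ (s + 1)) * hb2
      exact mul_left_cancel₀ two_ne_zero hfin
end

section
/- Let k be an odd integer. Then the union over all s ≥ 1 of the sets S_k(2^s, 0) = { n ⊙_k 2^s : n ∈ ℤ } equals ℤ \ {0}. -/
lemma odot_eq (k n : ℤ) (t : ℕ) :
    odot k n (2 ^ (t + 1)) = 2 ^ (t + 1) * (n + 1 - 2 ^ (t + 1)) + 2 ^ t * (2 ^ (t + 1) - 1) * k := by
  unfold odot
  have h : (2:ℤ) ^ (t + 1) * (2 ^ (t + 1) - 1) * k = 2 * (2 ^ t * (2 ^ (t + 1) - 1) * k) := by ring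
  rw [h, Int.mul_ediv_cancel_left _ (by norm_num)]
  ring

theorem stmt_13 (k : ℤ) (hk : Odd k) :
    {x : ℤ | ∃ s : ℕ, 1 ≤ s ∧ ∃ n : ℤ, odot k n (2 ^ s) = x} = {x : ℤ | x ≠ 0} := by
  ext x
  simp only [Set.mem_setOf_eq]
  constructor
  · rintro ⟨s, hs, n, rfl⟩
    obtain ⟨t, rfl⟩ : ∃ t, s = t + 1 := ⟨s - 1, by omega⟩
    rw [odot_eq]
    intro h0
    have hpt : (0:ℤ) < 2 ^ t := by positivity
    have hodd : Odd ((2:ℤ) ^ (t + 1) - 1) := by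
      refine Even.sub_odd ⟨2 ^ t, by rw [pow_succ]; ring⟩ odd_one
    obtain ⟨a, ha⟩ := hodd.mul hk
    have h1 : 2 ^ t * (2 * (n + 1 - 2 ^ t * 2) + (2 * a + 1)) = (0:ℤ) := by
      linear_combination h0 - 2 ^ t * ha
    have h2 : 2 * (n + 1 - 2 ^ t * 2) + (2 * a + 1) = (0:ℤ) := by
      rcases mul_eq_zero.mp h1 with h | h
      · omega
      · exact h
    omega
  · intro hx
    have hna : x.natAbs ≠ 0 := by simpa using hx
    obtain ⟨t, m, hm, hxm⟩ := Nat.exists_eq_pow_mul_and_not_dvd hna 2 (by norm_num)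
    set m' : ℤ := x.sign * m with hm'
    have hxeq : x = 2 ^ t * m' := by
      have := Int.sign_mul_natAbs x
      rw [hxm] at this
      push_cast at this
      rw [hm']; linarith [this]
    have hm'odd : Odd m' := by
      have hs1 : x.sign = 1 ∨ x.sign = -1 := by
        rcases lt_trichotomy x 0 with h | h | h
        · exact Or.inr (Int.sign_eq_neg_one_iff_neg.mpr h)
        · exact absurd h hx
        · exact Or.inl (Int.sign_eq_one_iff_pos.mpr h)
      rcases hs1 with h | h <;>
        · rw [hm', h]
          have : Odd (m : ℤ) := by
            rw [Int.odd_iff]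
            omega
          simpa using this
    have hodd : Odd ((2:ℤ) ^ (t + 1) - 1) := by
      refine Even.sub_odd ⟨2 ^ t, by rw [pow_succ]; ring⟩ odd_one
    have hdiff : Even (m' - (2 ^ (t + 1) - 1) * k) := Odd.sub_odd hm'odd (hodd.mul hk)
    obtain ⟨c, hc⟩ := hdiff
    refine ⟨t + 1, by omega, c - 1 + 2 ^ (t + 1), ?_⟩
    rw [odot_eq, hxeq]
    have : m' = 2 * c + (2 ^ (t + 1) - 1) * k := by omega
    rw [this, pow_succ]
    ring
end
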